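/- Let g_1, g_2 be binary morphisms on X = {a,b} with g_1(a) = a^s, g_1(b) = a^{γ_1} b a^{α_1} ⋯ b a^{α_{p-1}} b a^{γ_2}, g_2(a) = a^t, g_2(b) = a^{δ_1} b a^{β_1} ⋯ b a^{β_{q-1}} b a^{δ_2}, where s,t ≥ 1, p = q ≥ 2 and all exponents are nonnegative. If g_1 g_2 = g_2 g_1, then at least one of the following holds: (i) g_1 = g_2; (ii) g_1(b) and g_2(b) are both powers of b; (iii) g_1(a) = g_2(a) = a and the words g_1(b) and g_2(b) are a-conjugates. -/

import Mathlib

/-- Words over the binary alphabet: `false` is the letter `a`, `true` is the letter `b`. -/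
abbrev Word := List Bool

/-- The morphism of the free monoid determined by the images `g` of the letters. -/
def applyG (g : Bool → Word) (w : Word) : Word := w.flatMap g

/-- `a^n`. -/
def rep (n : ℕ) : Word := List.replicate n false

/-- `b a^{α 1} b a^{α 2} ⋯ b a^{α (p-1)} b`, a word with `p` occurrences of `b`. -/
def blockWord (p : ℕ) (α : ℕ → ℕ) : Word :=
  ((List.range (p - 1)).flatMap fun i => true :: rep (α (i + 1))) ++ [true]

/-- `w^k`. -/
def wordPow (w : Word) (k : ℕ) : Word := (List.replicate k w).flatten

/-- `u` and `v` are `a`-conjugates. -/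
def AConj (u v : Word) : Prop :=
  ∃ p q r s : ℕ, ∃ w : Word,
    u = rep p ++ w ++ rep q ∧ v = rep r ++ w ++ rep s ∧ p + q = r + s

/-- `w` is the infinite word `ω(g)`: for every `n`, the word obtained from `g^n(b)` by deleting
all occurrences of `a` preceding the first occurrence of `b` is a prefix of `w`. -/
def IsOmega (g : Bool → Word) (w : ℕ → Bool) : Prop :=
  ∀ n k : ℕ, ∀ hk : k < (((applyG g)^[n] [true]).dropWhile (fun x => !x)).length,
    (((applyG g)^[n] [true]).dropWhile (fun x => !x)).get ⟨k, hk⟩ = w k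

/-- `Aw w i` (for `i ≥ 1`): the number of occurrences of `a` in `w` strictly between the
`i`-th and `(i+1)`-th occurrences of `b` in `w`. -/
noncomputable def Aw (w : ℕ → Bool) (i : ℕ) : ℕ :=
  Nat.nth (fun n => w n = true) i - Nat.nth (fun n => w n = true) (i - 1) - 1

/-!
Write a word with `n` letters `b` as `a^{f 0} b a^{f 1} b ⋯ b a^{f n}` and call `f` its gaps.
If `g(a) = a^s` and `g(b)` has `p` letters `b` and gaps `G`, the gaps of `g(w)` are explicit:
inside a copy of `g(b)` they are those of `g(b)`, and at a junction of two copies they are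
`G p + s F k + G 0`. Comparing the `p² + 1` gaps of `g₁(g₂(b))` and `g₂(g₁(b))` gives `α = β`,
the boundary relations `s δ₁ + γ₁ = t γ₁ + δ₁` and `γ₂ + s δ₂ = δ₂ + t γ₂`, and at the `k`-th
junction `γ₁ + γ₂ + s α k = δ₁ + δ₂ + t α k`. If `s = t ≠ 1` the boundary relations force
`γ = δ`, so `g₁ = g₂`; if `s = t = 1` the junction relation is `γ₁ + γ₂ = δ₁ + δ₂`, an
`a`-conjugacy. If `s ≠ t` the relations combine to `(s - t) (γ₁ + γ₂ + (s - 1) α 1) = 0` and its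
mirror image, so `γ = δ = 0`, and then the junction relations force `α = 0`.
-/

def gapWord (n : ℕ) (f : ℕ → ℕ) : Word :=
  rep (f 0) ++ (List.range n).flatMap fun i => true :: rep (f (i + 1))

theorem rep_add (m n : ℕ) : rep (m + n) = rep m ++ rep n :=
  List.replicate_add ..

theorem gapWord_zero (f : ℕ → ℕ) : gapWord 0 f = rep (f 0) := by
  simp [gapWord]

theorem gapWord_succ (n : ℕ) (f : ℕ → ℕ) :
    gapWord (n + 1) f = rep (f 0) ++ true :: gapWord n fun i => f (i + 1) := by
  simp [gapWord, List.range_succ_eq_map, List.flatMap_map]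

theorem gapWord_congr {n : ℕ} {f g : ℕ → ℕ} (h : ∀ i ≤ n, f i = g i) :
    gapWord n f = gapWord n g := by
  induction n generalizing f g with
  | zero => rw [gapWord_zero, gapWord_zero, h 0 le_rfl]
  | succ n ih =>
    rw [gapWord_succ, gapWord_succ, h 0 (Nat.zero_le _), ih fun i hi => h (i + 1) (by omega)]

theorem rep_append_true_cons_inj {m n : ℕ} {u v : Word}
    (h : rep m ++ true :: u = rep n ++ true :: v) : m = n ∧ u = v := by
  induction m generalizing n with
  | zero => cases n <;> simp_all [rep, List.replicate_succ]
  | succ m ih =>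
    cases n with
    | zero => simp [rep, List.replicate_succ] at h
    | succ n =>
      simp only [rep, List.replicate_succ, List.cons_append, List.cons.injEq, true_and] at h
      exact (ih h).imp (congrArg (· + 1)) id

theorem gapWord_inj {n : ℕ} {f g : ℕ → ℕ} (h : gapWord n f = gapWord n g) :
    ∀ i ≤ n, f i = g i := by
  induction n generalizing f g with
  | zero =>
    intro i hi
    rw [Nat.le_zero.mp hi]
    simpa [gapWord_zero, rep] using congrArg List.length h
  | succ n ih =>
    rw [gapWord_succ, gapWord_succ] at h
    obtain ⟨h0, hsucc⟩ := rep_append_true_cons_inj h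
    rintro (_ | i) hi
    · exact h0
    · exact ih hsucc i (by omega)

theorem rep_append_gapWord {m n : ℕ} {f k : ℕ → ℕ} (h0 : k 0 = m + f 0)
    (hpos : ∀ i, 0 < i → i ≤ n → k i = f i) : rep m ++ gapWord n f = gapWord n k := by
  cases n with
  | zero => rw [gapWord_zero, gapWord_zero, h0, rep_add]
  | succ n =>
    rw [gapWord_succ, gapWord_succ, h0, rep_add, List.append_assoc,
      gapWord_congr fun i hi => (hpos (i + 1) (by omega) (by omega)).symm]

theorem gapWord_append {m n : ℕ} {f h k : ℕ → ℕ} (hlt : ∀ i < m, k i = f i)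
    (hm : k m = f m + h 0) (hgt : ∀ i, 0 < i → i ≤ n → k (m + i) = h i) :
    gapWord m f ++ gapWord n h = gapWord (m + n) k := by
  induction m generalizing f k with
  | zero =>
    rw [gapWord_zero, Nat.zero_add]
    exact rep_append_gapWord (by simpa using hm) fun i hi hin => by simpa using hgt i hi hin
  | succ m ih =>
    rw [gapWord_succ, List.append_assoc, List.cons_append, Nat.add_right_comm, gapWord_succ,
      hlt 0 (by omega),
      ih (fun i hi => hlt (i + 1) (by omega)) hm fun i hi hin => by
        simpa [Nat.add_right_comm] using hgt i hi hin]

theorem gapWord_const_zero (n : ℕ) : gapWord n (fun _ => 0) = List.replicate n true := by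
  induction n with
  | zero => simp [gapWord_zero, rep]
  | succ n ih => simp [gapWord_succ, ih, rep, List.replicate_succ]

theorem rep_append_blockWord_append_rep {p : ℕ} (hp : 0 < p) (c d : ℕ) (α : ℕ → ℕ) :
    rep c ++ blockWord p α ++ rep d =
      gapWord p fun i => if i = 0 then c else if i = p then d else α i := by
  obtain ⟨m, rfl⟩ : ∃ m, p = m + 1 := ⟨p - 1, by omega⟩
  have hmid : ((List.range m).flatMap fun i =>
      true :: rep (if i + 1 = 0 then c else if i + 1 = m + 1 then d else α (i + 1))) =
      (List.range m).flatMap fun i => true :: rep (α (i + 1)) :=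
    List.flatMap_congr fun i hi => by rw [if_neg (by omega), if_neg (by simp at hi; omega)]
  rw [gapWord, List.range_succ, List.flatMap_append, hmid, blockWord]
  simp

theorem applyG_append (g : Bool → Word) (u v : Word) :
    applyG g (u ++ v) = applyG g u ++ applyG g v :=
  List.flatMap_append ..

theorem applyG_true_cons (g : Bool → Word) (u : Word) :
    applyG g (true :: u) = g true ++ applyG g u :=
  List.flatMap_cons ..

theorem applyG_rep {g : Bool → Word} {s : ℕ} (ha : g false = rep s) (m : ℕ) :
    applyG g (rep m) = rep (s * m) := by
  induction m with
  | zero => rfl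
  | succ m ih =>
    rw [rep_add, applyG_append, ih, Nat.mul_succ, rep_add]
    simp [applyG, rep, ha]

/-- The gaps of `g(w)` when `w` has gaps `F` (and `n` letters `b`), `g(a) = a^s` and `g(b)` has
gaps `G` (and `p` letters `b`). Gap `j` with `p ∤ j` lies inside the copy number `j / p` of
`g(b)`; the gap `k p` is the last gap of the `k`-th copy, the image of `F k`, and the first gap of
the next copy. -/
def imageGaps (s p : ℕ) (G : ℕ → ℕ) (n : ℕ) (F : ℕ → ℕ) (j : ℕ) : ℕ :=
  if j % p = 0 then
    (if j = 0 then 0 else G p) + s * F (j / p) + (if j = n * p then 0 else G 0)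
  else G (j % p)

theorem applyG_gapWord {g : Bool → Word} {s p : ℕ} {G : ℕ → ℕ} (hp : 0 < p)
    (ha : g false = rep s) (hb : g true = gapWord p G) (n : ℕ) (F : ℕ → ℕ) :
    applyG g (gapWord n F) = gapWord (n * p) (imageGaps s p G n F) := by
  induction n generalizing F with
  | zero => simp [gapWord_zero, applyG_rep ha, imageGaps]
  | succ n ih =>
    have hhead : rep (s * F 0) ++ gapWord p G =
        gapWord p fun i => if i = 0 then s * F 0 + G 0 else G i :=
      rep_append_gapWord (by simp) fun i hi _ => by simp [hi.ne']
    rw [gapWord_succ, applyG_append, applyG_rep ha, applyG_true_cons, hb, ih,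
      ← List.append_assoc, hhead, Nat.succ_mul, Nat.add_comm (n * p) p]
    have hlast : p = (n + 1) * p ↔ n = 0 := by
      rw [Nat.succ_mul, ← Nat.mul_eq_zero.trans (or_iff_left hp.ne')]; omega
    refine gapWord_append (fun i hi => ?_) ?_ (fun i hi hin => ?_)
    · rcases Nat.eq_zero_or_pos i with rfl | hi0
      · simp [imageGaps, hp.ne']
      · simp [imageGaps, Nat.mod_eq_of_lt hi, hi0.ne']
    · simp only [imageGaps, Nat.mod_self, Nat.zero_mod, Nat.div_self hp, Nat.zero_div, hlast,
        hp.ne', zero_eq_mul, or_false, reduceIte, zero_add]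
      ring
    · have hend : p + i = (n + 1) * p ↔ i = n * p := by rw [Nat.succ_mul]; omega
      simp [imageGaps, Nat.add_mod_left, Nat.add_div_left _ hp, hi.ne', hend]

section imageGaps

variable {s p n : ℕ} {G F : ℕ → ℕ}

theorem imageGaps_zero (hp : 0 < p) (hn : 0 < n) : imageGaps s p G n F 0 = s * F 0 + G 0 := by
  simp [imageGaps, hp.ne', hn.ne']

theorem imageGaps_of_lt {j : ℕ} (hj : 0 < j) (hjp : j < p) : imageGaps s p G n F j = G j := by
  simp [imageGaps, Nat.mod_eq_of_lt hjp, hj.ne']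

theorem imageGaps_mul {k : ℕ} (hp : 0 < p) (hk : 0 < k) (hkn : k < n) :
    imageGaps s p G n F (k * p) = G p + s * F k + G 0 := by
  have hkn' : k * p ≠ n * p := (Nat.mul_lt_mul_right hp).mpr hkn |>.ne
  simp [imageGaps, hp.ne', hk.ne', hkn', Nat.mul_div_cancel _ hp]

theorem imageGaps_mul_self (hp : 0 < p) (hn : 0 < n) :
    imageGaps s p G n F (n * p) = G p + s * F n := by
  simp [imageGaps, hp.ne', hn.ne', Nat.mul_div_cancel _ hp]

end imageGaps

theorem comm_relations {s t p γ₁ γ₂ δ₁ δ₂ : ℕ} {α β : ℕ → ℕ} {g₁ g₂ : Bool → Word}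
    (hp : 0 < p) (h₁a : g₁ false = rep s) (h₁b : g₁ true = rep γ₁ ++ blockWord p α ++ rep γ₂)
    (h₂a : g₂ false = rep t) (h₂b : g₂ true = rep δ₁ ++ blockWord p β ++ rep δ₂)
    (hcomm : applyG g₁ ∘ applyG g₂ = applyG g₂ ∘ applyG g₁) :
    s * δ₁ + γ₁ = t * γ₁ + δ₁ ∧ γ₂ + s * δ₂ = δ₂ + t * γ₂ ∧
      ∀ k, 0 < k → k < p → α k = β k ∧ γ₁ + γ₂ + s * α k = δ₁ + δ₂ + t * α k := by
  rw [rep_append_blockWord_append_rep hp] at h₁b h₂b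
  have hb := congrFun hcomm [true]
  simp only [Function.comp_apply, applyG, List.flatMap_singleton] at hb
  rw [h₁b, h₂b, ← applyG, ← applyG, applyG_gapWord hp h₁a h₁b,
    applyG_gapWord hp h₂a h₂b] at hb
  have H := gapWord_inj hb
  refine ⟨?_, ?_, fun k hk hkp => ?_⟩
  · simpa [imageGaps_zero hp hp] using H 0 (Nat.zero_le _)
  · simpa [imageGaps_mul_self hp hp, hp.ne'] using H (p * p) le_rfl
  · have hαβ : α k = β k := by
      simpa [imageGaps_of_lt hk hkp, hk.ne', hkp.ne] using H k (by nlinarith)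
    have hjunction : γ₂ + s * β k + γ₁ = δ₂ + t * α k + δ₁ := by
      simpa [imageGaps_mul hp hk hkp, hp.ne', hk.ne', hkp.ne] using H (k * p) (by nlinarith)
    rw [← hαβ] at hjunction
    exact ⟨hαβ, by omega⟩

theorem eq_of_mul_add_eq_mul_add {s a b : ℕ} (hs : s ≠ 1) (h : s * a + b = s * b + a) :
    a = b := by
  rcases Nat.lt_or_ge s 1 with hs0 | hs2
  · simpa [Nat.lt_one_iff.mp hs0] using h.symm
  · rcases lt_trichotomy a b with hab | hab | hab <;> nlinarith [Nat.lt_of_le_of_ne hs2 hs.symm]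

theorem eq_zero_of_comm_relations {s t Γ Δ x : ℕ} (hs : 1 ≤ s) (ht : 1 ≤ t) (hst : s ≠ t)
    (hends : s * Δ + Γ = t * Γ + Δ) (hjunction : Γ + s * x = Δ + t * x) : Γ = 0 ∧ Δ = 0 := by
  zify at hs ht hends hjunction
  have hst' : (s : ℤ) - t ≠ 0 := sub_ne_zero.mpr (by exact_mod_cast hst)
  have hΓ : ((s : ℤ) - t) * (Γ + (s - 1) * x) = 0 := by
    linear_combination hends + (s - 1) * hjunction
  have hΔ : ((s : ℤ) - t) * (Δ + (t - 1) * x) = 0 := by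
    linear_combination hends + (t - 1) * hjunction
  rw [mul_eq_zero, or_iff_right hst'] at hΓ hΔ
  constructor <;> nlinarith [Int.natCast_nonneg Γ, Int.natCast_nonneg Δ, Int.natCast_nonneg x]

theorem blockWord_congr {p : ℕ} {α β : ℕ → ℕ} (h : ∀ k, 0 < k → k < p → α k = β k) :
    blockWord p α = blockWord p β := by
  unfold blockWord
  congr 1
  exact List.flatMap_congr fun i hi => by
    rw [h (i + 1) i.succ_pos (by simp at hi; omega)]

theorem blockWord_eq_replicate {p : ℕ} (hp : 0 < p) {α : ℕ → ℕ}
    (h : ∀ k, 0 < k → k < p → α k = 0) : blockWord p α = List.replicate p true := by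
  have h0 := rep_append_blockWord_append_rep hp 0 0 α
  simp only [rep, List.replicate_zero, List.nil_append, List.append_nil] at h0
  rw [h0, ← gapWord_const_zero]
  exact gapWord_congr fun i hi => by split_ifs <;> first | rfl | exact h i (by omega) (by omega)

theorem stmt12_general (s t : ℕ) (hs : 1 ≤ s) (ht : 1 ≤ t)
    (p q : ℕ) (hp : 2 ≤ p)
    (γ₁ γ₂ δ₁ δ₂ : ℕ) (α β : ℕ → ℕ)
    (g₁ g₂ : Bool → Word)
    (h₁a : g₁ false = rep s)
    (h₁b : g₁ true = rep γ₁ ++ blockWord p α ++ rep γ₂)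
    (h₂a : g₂ false = rep t)
    (h₂b : g₂ true = rep δ₁ ++ blockWord q β ++ rep δ₂)
    (hpq : p = q)
    (hcomm : applyG g₁ ∘ applyG g₂ = applyG g₂ ∘ applyG g₁) :
    g₁ = g₂ ∨
      ((∃ k : ℕ, g₁ true = List.replicate k true) ∧
        (∃ k : ℕ, g₂ true = List.replicate k true)) ∨
      (g₁ false = [false] ∧ g₂ false = [false] ∧ AConj (g₁ true) (g₂ true)) := by
  subst hpq
  have hp0 : 0 < p := by omega
  obtain ⟨hstart, hend, hmid⟩ := comm_relations hp0 h₁a h₁b h₂a h₂b hcomm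
  have hαβ : blockWord p β = blockWord p α := blockWord_congr fun k hk hkp => (hmid k hk hkp).1.symm
  have hjunction := (hmid 1 one_pos hp).2
  rcases eq_or_ne s t with rfl | hst
  · rcases eq_or_ne s 1 with rfl | hs1
    · refine .inr (.inr ⟨by simp [h₁a, rep], by simp [h₂a, rep], ?_⟩)
      exact ⟨γ₁, γ₂, δ₁, δ₂, blockWord p α, h₁b, by rw [h₂b, hαβ], by omega⟩
    · refine .inl (funext fun x => ?_)
      cases x
      · rw [h₁a, h₂a]
      · rw [h₁b, h₂b, hαβ, eq_of_mul_add_eq_mul_add hs1 hstart,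
          eq_of_mul_add_eq_mul_add hs1 (by omega : s * δ₂ + γ₂ = s * γ₂ + δ₂)]
  · obtain ⟨hγ, hδ⟩ := eq_zero_of_comm_relations hs ht hst
      (by rw [Nat.mul_add, Nat.mul_add]; omega) hjunction
    have hα : ∀ k, 0 < k → k < p → α k = 0 := fun k hk hkp => by
      have := (hmid k hk hkp).2
      exact (mul_eq_mul_right_iff.mp (by omega : s * α k = t * α k)).resolve_left hst
    refine .inr (.inl ⟨⟨p, ?_⟩, ⟨p, ?_⟩⟩)
    · rw [h₁b, blockWord_eq_replicate hp0 hα, Nat.eq_zero_of_add_eq_zero_right hγ,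
        Nat.eq_zero_of_add_eq_zero_left hγ]
      simp [rep]
    · rw [h₂b, hαβ, blockWord_eq_replicate hp0 hα, Nat.eq_zero_of_add_eq_zero_right hδ,
        Nat.eq_zero_of_add_eq_zero_left hδ]
      simp [rep]

/-- if `p = q` and `g₁g₂ = g₂g₁` then `g₁ = g₂`, or both `g₁(b)`, `g₂(b)` are
powers of `b`, or `g₁(a)=g₂(a)=a` and `g₁(b)`, `g₂(b)` are `a`-conjugates. -/
theorem stmt12 (s t : ℕ) (hs : 1 ≤ s) (ht : 1 ≤ t)
    (p q : ℕ) (hp : 2 ≤ p) (hq : 2 ≤ q)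
    (γ₁ γ₂ δ₁ δ₂ : ℕ) (α β : ℕ → ℕ)
    (g₁ g₂ : Bool → Word)
    (h₁a : g₁ false = rep s)
    (h₁b : g₁ true = rep γ₁ ++ blockWord p α ++ rep γ₂)
    (h₂a : g₂ false = rep t)
    (h₂b : g₂ true = rep δ₁ ++ blockWord q β ++ rep δ₂)
    (hpq : p = q)
    (hcomm : applyG g₁ ∘ applyG g₂ = applyG g₂ ∘ applyG g₁) :
    g₁ = g₂ ∨
      ((∃ k : ℕ, g₁ true = List.replicate k true) ∧
        (∃ k : ℕ, g₂ true = List.replicate k true)) ∨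
      (g₁ false = [false] ∧ g₂ false = [false] ∧ AConj (g₁ true) (g₂ true)) :=
  stmt12_general s t hs ht p q hp γ₁ γ₂ δ₁ δ₂ α β g₁ g₂ h₁a h₁b h₂a h₂b hpq hcomm
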